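/- Let i be a nonzero integer, let T and T' be finitely generated abelian groups, and let N : T → T' be a homomorphism. Set D = T ⊗_ℤ K₀ and D' = T' ⊗_ℤ K₀, with σ acting as 1⊗σ and N extended K₀-linearly. Then for every pair (x,y) ∈ D ⊕ D' with N(x) = (pⁱσ − 1)(y), there exists a unique z ∈ D with x = (pⁱσ − 1)(z) and y = N(z). -/

import Mathlib

open TensorProduct

/-- `K₀`: the fraction field of the ring of `p`-typical Witt vectors of the finite
field `𝔽_q` with `q = p^f` elements. -/
abbrev K0 (p f : ℕ) [Fact p.Prime] : Type :=
  FractionRing (WittVector p (GaloisField p f))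

/-- `ℚ_p`, realized as the fraction field of `W(𝔽_p)`. -/
abbrev Qp (p : ℕ) [Fact p.Prime] : Type :=
  FractionRing (WittVector p (ZMod p))

/-- The Frobenius `σ` of `K₀`, induced by the Witt vector Frobenius of `W(𝔽_q)`. -/
noncomputable def sigma (p f : ℕ) [Fact p.Prime] : K0 p f ≃+* K0 p f :=
  WittVector.FractionRing.frobenius p (GaloisField p f)

/-- The embedding `ℚ_p → K₀` induced by `W(𝔽_p) → W(𝔽_q)`. -/
noncomputable def iota (p f : ℕ) [Fact p.Prime] : Qp p →+* K0 p f :=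
  IsFractionRing.lift
    (g := (algebraMap (WittVector p (GaloisField p f)) (K0 p f)).comp
      (WittVector.map (algebraMap (ZMod p) (GaloisField p f))))
    (by
      rw [RingHom.coe_comp]
      exact Function.Injective.comp (IsFractionRing.injective _ _)
        (WittVector.map_injective _ (RingHom.injective _)))

/-- `σ` as a `ℤ`-linear endomorphism of `K₀`. -/
noncomputable def sigmaLin (p f : ℕ) [Fact p.Prime] : K0 p f →ₗ[ℤ] K0 p f :=
  AddMonoidHom.toIntLinearMap (sigma p f).toRingHom.toAddMonoidHom

/-- `ι : ℚ_p → K₀` as a `ℤ`-linear map. -/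
noncomputable def iotaLin (p f : ℕ) [Fact p.Prime] : Qp p →ₗ[ℤ] K0 p f :=
  AddMonoidHom.toIntLinearMap (iota p f).toAddMonoidHom

/-- The `ℤ`-linear endomorphism `a ↦ pⁱ·σ(a)` of `K₀` (with `pⁱ ∈ K₀` the `zpow`). -/
noncomputable def twist (p f : ℕ) [Fact p.Prime] (i : ℤ) : K0 p f →ₗ[ℤ] K0 p f :=
  ((p : K0 p f) ^ i) • sigmaLin p f

/-! Since `σ^f = 1` on `K₀`, the `ℤ`-linear map `φ = pⁱσ` satisfies `φ^f = p^{if}`, so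
`φ^f - 1` is multiplication by the nonzero scalar `p^{if} - 1`; factoring
`φ^f - 1 = (∑ φ^j)(φ - 1)` with commuting factors shows that `φ - 1` is bijective on `K₀`, hence
so is `1 ⊗ (φ - 1)` on `T ⊗ K₀` and on `T' ⊗ K₀`. As `N ⊗ 1` commutes with `1 ⊗ (φ - 1)`, the
pair `(x, y)` is the image of `z = (1 ⊗ (φ - 1))⁻¹ x`, and injectivity on `T' ⊗ K₀` forces
`y = N z`. -/

theorem isUnit_sub_one_of_isUnit_pow_sub_one {R : Type*} [Ring R] {a : R} {n : ℕ}
    (h : IsUnit (a ^ n - 1)) : IsUnit (a - 1) := by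
  have hc : Commute (∑ i ∈ Finset.range n, a ^ i) (a - 1) :=
    .sum_left _ _ _ fun i _ => ((Commute.self_pow a i).sub_left (Commute.one_left _)).symm
  rw [← geom_sum_mul] at h
  exact (hc.isUnit_mul_iff.1 h).2

theorem Function.Semiconj.existsUnique_eq_and_eq {α β : Type*} {g : α → β} {fa : α → α}
    {fb : β → β} (h : Function.Semiconj g fa fb) (hfa : Function.Bijective fa)
    (hfb : Function.Injective fb) {x : α} {y : β} (hxy : g x = fb y) :
    ∃! z, x = fa z ∧ y = g z := by
  obtain ⟨z, rfl⟩ := hfa.2 x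
  refine ⟨z, ⟨rfl, hfb ?_⟩, fun w hw => hfa.1 hw.1.symm⟩
  rw [← hxy, h.eq]

theorem TensorProduct.map_id_apply_sub_self {R M N : Type*} [CommRing R] [AddCommGroup M]
    [Module R M] [AddCommGroup N] [Module R N] (g : Module.End R N) (w : M ⊗[R] N) :
    TensorProduct.map LinearMap.id g w - w = (g - 1).lTensor M w := by
  rw [LinearMap.lTensor_sub, Module.End.one_eq_id, LinearMap.lTensor_id]
  rfl

theorem WittVector.coeff_frobenius_iterate {p : ℕ} [Fact p.Prime] {R : Type*} [CommRing R]
    [CharP R p] (n : ℕ) (x : WittVector p R) (j : ℕ) :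
    (WittVector.frobenius^[n] x).coeff j = x.coeff j ^ p ^ n := by
  induction n generalizing x with
  | zero => simp
  | succ n ih => rw [Function.iterate_succ_apply, ih, coeff_frobenius_charP, ← pow_mul, pow_succ']

theorem WittVector.frobenius_iterate_card_eq_self {p : ℕ} [Fact p.Prime] {k : Type*} [Field k]
    [Fintype k] [CharP k p] {f : ℕ} (hk : Fintype.card k = p ^ f) (x : WittVector p k) :
    WittVector.frobenius^[f] x = x := by
  ext j
  rw [coeff_frobenius_iterate, ← hk, FiniteField.pow_card]

section Frobenius

variable (p f : ℕ) [Fact p.Prime]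

theorem sigma_algebraMap (w : WittVector p (GaloisField p f)) :
    sigma p f (algebraMap _ (K0 p f) w) = algebraMap _ (K0 p f) (WittVector.frobenius w) :=
  IsFractionRing.ringEquivOfRingEquiv_algebraMap _ _

theorem sigma_pow_eq_one (hf : f ≠ 0) : sigma p f ^ f = 1 := by
  have : Fintype (GaloisField p f) := Fintype.ofFinite _
  have hk : Fintype.card (GaloisField p f) = p ^ f := by
    rw [← Nat.card_eq_fintype_card, GaloisField.card p f hf]
  have hsemi : Function.Semiconj (algebraMap _ (K0 p f)) WittVector.frobenius (sigma p f) :=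
    fun w => (sigma_algebraMap p f w).symm
  refine RingEquiv.toRingHom_injective <|
    IsLocalization.ringHom_ext (nonZeroDivisors (WittVector p (GaloisField p f))) ?_
  ext w
  simp [RingAut.coe_pow, ← (hsemi.iterate_right f).eq,
    WittVector.frobenius_iterate_card_eq_self hk]

theorem twist_apply (i : ℤ) (a : K0 p f) :
    twist p f i a = (p : K0 p f) ^ i * sigma p f a := by
  simp [twist, sigmaLin]

theorem twist_pow_apply (i : ℤ) (n : ℕ) (a : K0 p f) :
    (twist p f i ^ n) a = (p : K0 p f) ^ (i * n) * (sigma p f ^ n) a := by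
  have hp : (p : K0 p f) ≠ 0 := WittVector.FractionRing.p_nonzero p _
  induction n generalizing a with
  | zero => simp
  | succ n ih =>
    rw [pow_succ, Module.End.mul_apply, ih, twist_apply, pow_succ, RingAut.mul_apply, map_mul,
      map_zpow₀, map_natCast, ← mul_assoc, ← zpow_add₀ hp]
    push_cast
    ring_nf

theorem natCast_zpow_ne_one {m : ℤ} (hm : m ≠ 0) : (p : K0 p f) ^ m ≠ 1 := by
  intro h
  have hW : (p : WittVector p (GaloisField p f)) ^ m.natAbs = 1 := by
    apply IsFractionRing.injective _ (K0 p f)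
    rw [map_pow, map_natCast, map_one, ← zpow_natCast]
    rcases Int.natAbs_eq m with hm' | hm'
    · rw [← hm', h]
    · rw [← neg_neg (m.natAbs : ℤ), ← hm', zpow_neg, h, inv_one]
  exact (WittVector.irreducible p).not_isUnit (.of_pow_eq_one hW (Int.natAbs_ne_zero.2 hm))

theorem isUnit_twist_sub_one (hf : f ≠ 0) (i : ℤ) (hi : i ≠ 0) : IsUnit (twist p f i - 1) := by
  refine isUnit_sub_one_of_isUnit_pow_sub_one (n := f) ((Module.End.isUnit_iff _).2 ?_)
  have hc : (p : K0 p f) ^ (i * f) - 1 ≠ 0 :=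
    sub_ne_zero.2 (natCast_zpow_ne_one p f (mul_ne_zero hi (by exact_mod_cast hf)))
  convert mulLeft_bijective₀ _ hc using 1
  ext a
  simp [twist_pow_apply, sigma_pow_eq_one p f hf, sub_mul]

end Frobenius

theorem coboundary_unique_general (p f : ℕ) [Fact p.Prime] (hf : f ≠ 0) (i : ℤ) (hi : i ≠ 0)
    (T T' : Type) [AddCommGroup T] [AddCommGroup T']
    (N : T →+ T') :
    ∀ (x : T ⊗[ℤ] K0 p f) (y : T' ⊗[ℤ] K0 p f),
      TensorProduct.map N.toIntLinearMap (LinearMap.id : K0 p f →ₗ[ℤ] K0 p f) x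
        = TensorProduct.map (LinearMap.id : T' →ₗ[ℤ] T') (twist p f i) y - y →
      ∃! z : T ⊗[ℤ] K0 p f,
        x = TensorProduct.map (LinearMap.id : T →ₗ[ℤ] T) (twist p f i) z - z ∧
        y = TensorProduct.map N.toIntLinearMap (LinearMap.id : K0 p f →ₗ[ℤ] K0 p f) z := by
  intro x y hxy
  have hL := isUnit_twist_sub_one p f hf i hi
  have hbij (M : Type) [AddCommGroup M] : Function.Bijective ((twist p f i - 1).lTensor M) :=
    (Module.End.isUnit_iff _).1 (hL.map (Module.End.lTensorAlgHom ℤ (K0 p f) M))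
  simp only [TensorProduct.map_id_apply_sub_self] at hxy ⊢
  refine Function.Semiconj.existsUnique_eq_and_eq (fun z => ?_) (hbij T) (hbij T').1 hxy
  exact LinearMap.congr_fun ((LinearMap.rTensor_comp_lTensor (f := N.toIntLinearMap) (g := twist p f i - 1)).trans
    (LinearMap.lTensor_comp_rTensor ..).symm) z

/-- for a nonzero integer `i`, finitely generated abelian groups `T, T'` and a
homomorphism `N : T → T'`, every pair `(x,y) ∈ D ⊕ D'` with `N(x) = (pⁱσ − 1)(y)` is of the
form `((pⁱσ − 1)(z), N(z))` for a unique `z ∈ D`. -/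
theorem coboundary_unique (p f : ℕ) [Fact p.Prime] (hf : f ≠ 0) (i : ℤ) (hi : i ≠ 0)
    (T T' : Type) [AddCommGroup T] [AddCommGroup T']
    [AddGroup.FG T] [AddGroup.FG T'] (N : T →+ T') :
    ∀ (x : T ⊗[ℤ] K0 p f) (y : T' ⊗[ℤ] K0 p f),
      TensorProduct.map N.toIntLinearMap (LinearMap.id : K0 p f →ₗ[ℤ] K0 p f) x
        = TensorProduct.map (LinearMap.id : T' →ₗ[ℤ] T') (twist p f i) y - y →
      ∃! z : T ⊗[ℤ] K0 p f,
        x = TensorProduct.map (LinearMap.id : T →ₗ[ℤ] T) (twist p f i) z - z ∧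
        y = TensorProduct.map N.toIntLinearMap (LinearMap.id : K0 p f →ₗ[ℤ] K0 p f) z :=
  coboundary_unique_general p f hf i hi T T' N
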